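/- arXiv:1504.07801 — 12 statements merged into one kernel-verified Lean document; each statement's English description precedes it below -/
import Mathlib

section
/- Let 𝔤 be a four-dimensional real Lie algebra equipped with a symmetric bilinear form g for which some basis of 𝔤 has Gram matrix diag(1,1,1,−1) (a Lorentzian inner product). Suppose 𝔤 = 𝔥 ⊕ span(v) as vector spaces, where 𝔥 is a three-dimensional Lie subalgebra with [v,𝔥] ⊆ 𝔥, and suppose the restriction of g to 𝔥 is degenerate. Then there exists a basis (e₁,e₂,e₃,e₄) of 𝔤 such that 𝔥 = span(e₁,e₂,e₃), [x,e₄] ∈ 𝔥 for all x ∈ 𝔥, and the Gram matrix of g with respect to (e₁,e₂,e₃,e₄) is [[1,0,0,0],[0,1,0,0],[0,0,0,1],[0,0,1,0]] (i.e. g(e₁,e₁)=g(e₂,e₂)=1, g(e₃,e₄)=g(e₄,e₃)=1, and all other entries vanish). -/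
/-!
In a Lorentz-orthonormal basis a nonzero null vector has nonzero time component, so it is a
multiple of `(n, 1)` with `n` a spatial unit vector. Completing `n` to an orthonormal frame
`(u, w, n)` of `ℝ³` gives the null frame `(u, 0), (w, 0), (n, 1), (n/2, -1/2)`, whose Gram matrix
is the required one. A nonzero radical vector `x` of `g|𝔥` is null and `𝔥 ⊆ x^⊥`; both are
hyperplanes, so `𝔥 = x^⊥`, which is the span of the first three frame vectors. Finally `𝔥` is an
ideal, because `𝔤 = 𝔥 + ℝv` and `[v, 𝔥] ⊆ 𝔥`.
-/

open scoped RealInnerProductSpace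

theorem LinearMap.BilinForm.linearIndependent_of_det_ne_zero {K V ι : Type*} [Field K]
    [AddCommGroup V] [Module K V] [Fintype ι] [DecidableEq ι] (B : LinearMap.BilinForm K V)
    {f : ι → V} {M : Matrix ι ι K} (hM : ∀ i j, B (f i) (f j) = M i j) (hdet : M.det ≠ 0) :
    LinearIndependent K f := by
  rw [Fintype.linearIndependent_iff]
  intro c hc
  refine congrFun (Matrix.eq_zero_of_vecMul_eq_zero hdet (funext fun j => ?_))
  simpa [Matrix.vecMul, dotProduct, ← hM] using congrArg (fun y => B y (f j)) hc

theorem Submodule.eq_ker_of_le_ker {K V : Type*} [Field K] [AddCommGroup V] [Module K V]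
    [FiniteDimensional K V] {W : Submodule K V} {f : Module.Dual K V} (hf : f ≠ 0)
    (hW : W ≤ LinearMap.ker f) (hdim : Module.finrank K W + 1 = Module.finrank K V) :
    W = LinearMap.ker f :=
  Submodule.eq_of_le_of_finrank_eq hW (by
    have := Module.Dual.finrank_ker_add_one_of_ne_zero hf
    omega)

theorem Module.Basis.ker_coord {R M ι : Type*} [CommRing R] [AddCommGroup M] [Module R M]
    (e : Module.Basis ι R M) (i : ι) :
    LinearMap.ker (e.coord i) = Submodule.span R (e '' {i}ᶜ) := by
  ext y
  simp [e.mem_span_image]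

theorem LieSubalgebra.lie_mem_of_sup_span_singleton_eq_top {R L : Type*} [CommRing R] [LieRing L]
    [LieAlgebra R L] (h : LieSubalgebra R L) {v : L} (hsup : h.toSubmodule ⊔ (R ∙ v) = ⊤)
    (hder : ∀ x ∈ h, ⁅v, x⁆ ∈ h) {x : L} (hx : x ∈ h) (y : L) : ⁅x, y⁆ ∈ h := by
  obtain ⟨a, ha, z, hz, rfl⟩ := Submodule.mem_sup.mp (hsup ▸ Submodule.mem_top (x := y))
  obtain ⟨c, rfl⟩ := Submodule.mem_span_singleton.mp hz
  rw [lie_add, lie_smul, ← lie_skew x v]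
  exact h.add_mem (h.lie_mem hx ha) (h.smul_mem c (neg_mem (hder x hx)))

theorem exists_orthonormal_pair_orthogonal {E : Type*} [NormedAddCommGroup E]
    [InnerProductSpace ℝ E] (hE : Module.finrank ℝ E = 3) {n : E} (hn : n ≠ 0) :
    ∃ u w : E, ‖u‖ = 1 ∧ ‖w‖ = 1 ∧ ⟪u, w⟫ = 0 ∧ ⟪n, u⟫ = 0 ∧ ⟪n, w⟫ = 0 := by
  have : FiniteDimensional ℝ E := Module.finite_of_finrank_eq_succ hE
  have hK : Module.finrank ℝ (ℝ ∙ n)ᗮ = 2 := by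
    have := (ℝ ∙ n).finrank_add_finrank_orthogonal
    rw [finrank_span_singleton hn, hE] at this
    omega
  obtain ⟨o⟩ : Nonempty (OrthonormalBasis (Fin 2) ℝ (ℝ ∙ n)ᗮ) :=
    ⟨(stdOrthonormalBasis ℝ _).reindex (finCongr hK)⟩
  exact ⟨o 0, o 1, o.orthonormal.1 0, o.orthonormal.1 1,
    by rw [← Submodule.coe_inner, o.orthonormal.2 Fin.zero_ne_one],
    (o 0).2 n (Submodule.mem_span_singleton_self n),
    (o 1).2 n (Submodule.mem_span_singleton_self n)⟩

section Minkowski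

variable {G : Type*} [AddCommGroup G] [Module ℝ G] (b : Module.Basis (Fin 4) ℝ G)

def IsLorentzOrthonormal (g : LinearMap.BilinForm ℝ G) : Prop :=
  ∀ i j, g (b i) (b j) = if i = j then (if i = 3 then -1 else 1) else 0

noncomputable def spacetime (p : EuclideanSpace ℝ (Fin 3)) (t : ℝ) : G :=
  p 0 • b 0 + p 1 • b 1 + p 2 • b 2 + t • b 3

theorem smul_spacetime (c : ℝ) (p : EuclideanSpace ℝ (Fin 3)) (t : ℝ) :
    c • spacetime b p t = spacetime b (c • p) (c * t) := by
  simp [spacetime, smul_add, smul_smul]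

theorem exists_eq_spacetime (x : G) : ∃ p t, x = spacetime b p t :=
  ⟨!₂[b.repr x 0, b.repr x 1, b.repr x 2], b.repr x 3,
    (b.sum_repr x).symm.trans (by rw [Fin.sum_univ_four]; rfl)⟩

variable {b} {g : LinearMap.BilinForm ℝ G}

theorem IsLorentzOrthonormal.apply_spacetime (hb : IsLorentzOrthonormal b g)
    (p q : EuclideanSpace ℝ (Fin 3)) (s t : ℝ) :
    g (spacetime b p s) (spacetime b q t) = ⟪p, q⟫ - s * t := by
  unfold IsLorentzOrthonormal at hb
  simp [spacetime, hb, PiLp.inner_apply, Fin.sum_univ_three]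
  ring

theorem IsLorentzOrthonormal.exists_eq_smul_spacetime_of_isNull (hb : IsLorentzOrthonormal b g)
    {x : G} (hx : x ≠ 0) (hxx : g x x = 0) :
    ∃ t : ℝ, t ≠ 0 ∧ ∃ n, ‖n‖ = 1 ∧ x = t • spacetime b n 1 := by
  obtain ⟨p, t, rfl⟩ := exists_eq_spacetime b x
  rw [hb.apply_spacetime] at hxx
  have ht : t ≠ 0 := by
    rintro rfl
    have hp : p = 0 := by simpa using hxx
    exact hx (by simp [hp, spacetime])
  refine ⟨t, ht, t⁻¹ • p, ?_, ?_⟩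
  · have hp : ‖p‖ = |t| := by
      rw [← sq_eq_sq₀ (norm_nonneg _) (abs_nonneg _), sq_abs, ← real_inner_self_eq_norm_sq]
      linarith
    rw [norm_smul, norm_inv, hp, Real.norm_eq_abs, inv_mul_cancel₀ (abs_ne_zero.mpr ht)]
  · rw [smul_spacetime, smul_inv_smul₀ ht, mul_one]

variable (b) in
noncomputable def nullFrame (n u w : EuclideanSpace ℝ (Fin 3)) : Fin 4 → G :=
  ![spacetime b u 0, spacetime b w 0, spacetime b n 1, spacetime b ((2 : ℝ)⁻¹ • n) (-2⁻¹)]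

theorem IsLorentzOrthonormal.apply_nullFrame (hb : IsLorentzOrthonormal b g)
    {n u w : EuclideanSpace ℝ (Fin 3)} (hn : ‖n‖ = 1) (hu : ‖u‖ = 1) (hw : ‖w‖ = 1)
    (huw : ⟪u, w⟫ = 0) (hnu : ⟪n, u⟫ = 0) (hnw : ⟪n, w⟫ = 0) (i j : Fin 4) :
    g (nullFrame b n u w i) (nullFrame b n u w j) =
      (!![1,0,0,0; 0,1,0,0; 0,0,0,1; 0,0,1,0] : Matrix (Fin 4) (Fin 4) ℝ) i j := by
  have hwu : ⟪w, u⟫ = 0 := by rwa [real_inner_comm]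
  have hun : ⟪u, n⟫ = 0 := by rwa [real_inner_comm]
  have hwn : ⟪w, n⟫ = 0 := by rwa [real_inner_comm]
  fin_cases i <;> fin_cases j <;>
    simp [nullFrame, hb.apply_spacetime, real_inner_smul_left, real_inner_smul_right, norm_smul,
      hn, hu, hw, huw, hnu, hnw, hwu, hun, hwn] <;> norm_num

end Minkowski

theorem stmt_2_general {G : Type*} [LieRing G] [LieAlgebra ℝ G]
    (g : LinearMap.BilinForm ℝ G)
    (b : Module.Basis (Fin 4) ℝ G)
    (hb : ∀ i j, g (b i) (b j) = if i = j then (if i = 3 then -1 else 1) else 0)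
    (h : LieSubalgebra ℝ G) (hdim : Module.finrank ℝ h = 3)
    (v : G)
    (hsup : h.toSubmodule ⊔ (ℝ ∙ v) = ⊤)
    (hder : ∀ x ∈ h, ⁅v, x⁆ ∈ h)
    (hdeg : ∃ x ∈ h, x ≠ 0 ∧ ∀ y ∈ h, g x y = 0) :
    ∃ e : Module.Basis (Fin 4) ℝ G,
      h.toSubmodule = Submodule.span ℝ {e 0, e 1, e 2} ∧
      (∀ x ∈ h, ⁅x, e 3⁆ ∈ h) ∧
      (∀ i j, g (e i) (e j) =
        (!![1,0,0,0; 0,1,0,0; 0,0,0,1; 0,0,1,0] : Matrix (Fin 4) (Fin 4) ℝ) i j) := by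
  have hb : IsLorentzOrthonormal b g := hb
  have : FiniteDimensional ℝ G := b.finiteDimensional_of_finite
  obtain ⟨x, hxh, hx0, hx⟩ := hdeg
  obtain ⟨t, ht, n, hn, rfl⟩ := hb.exists_eq_smul_spacetime_of_isNull hx0 (hx _ hxh)
  obtain ⟨u, w, hu, hw, huw, hnu, hnw⟩ := exists_orthonormal_pair_orthogonal
    finrank_euclideanSpace_fin (norm_ne_zero_iff.mp (hn ▸ one_ne_zero))
  have hgram := hb.apply_nullFrame hn hu hw huw hnu hnw
  have hli : LinearIndependent ℝ (nullFrame b n u w) :=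
    g.linearIndependent_of_det_ne_zero hgram (by simp [Matrix.det_succ_row_zero, Fin.sum_univ_succ])
  let e := basisOfLinearIndependentOfCardEqFinrank hli (by simp [Module.finrank_eq_card_basis b])
  have he : ⇑e = nullFrame b n u w := coe_basisOfLinearIndependentOfCardEqFinrank hli _
  have hxe : g (t • spacetime b n 1) = t • e.coord 3 := by
    refine e.ext fun j => ?_
    rw [map_smul, LinearMap.smul_apply, LinearMap.smul_apply, e.coord_apply, e.repr_self, he,
      show spacetime b n 1 = nullFrame b n u w 2 from rfl, hgram]
    fin_cases j <;> simp
  have hker : h.toSubmodule = LinearMap.ker (e.coord 3) :=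
    Submodule.eq_ker_of_le_ker (fun h0 => by simpa using LinearMap.congr_fun h0 (e 3))
      (fun y hy => by simpa [hxe, ht] using hx y hy)
      (by rw [Module.finrank_eq_card_basis b, Fintype.card_fin]; exact congrArg (· + 1) hdim)
  refine ⟨e, ?_, fun y hy => h.lie_mem_of_sup_span_singleton_eq_top hsup hder hy (e 3), ?_⟩
  · rw [hker, e.ker_coord, show ({3}ᶜ : Set (Fin 4)) = {0, 1, 2} by ext i; fin_cases i <;> simp,
      Set.image_insert_eq, Set.image_insert_eq, Set.image_singleton]
  · simpa [he] using hgram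

theorem stmt_2 {G : Type*} [LieRing G] [LieAlgebra ℝ G]
    (g : LinearMap.BilinForm ℝ G) (hsymm : ∀ x y, g x y = g y x)
    (b : Module.Basis (Fin 4) ℝ G)
    (hb : ∀ i j, g (b i) (b j) = if i = j then (if i = 3 then -1 else 1) else 0)
    (h : LieSubalgebra ℝ G) (hdim : Module.finrank ℝ h = 3)
    (v : G)
    (hsup : h.toSubmodule ⊔ (ℝ ∙ v) = ⊤)
    (hinf : h.toSubmodule ⊓ (ℝ ∙ v) = ⊥)
    (hder : ∀ x ∈ h, ⁅v, x⁆ ∈ h)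
    (hdeg : ∃ x ∈ h, x ≠ 0 ∧ ∀ y ∈ h, g x y = 0) :
    ∃ e : Module.Basis (Fin 4) ℝ G,
      h.toSubmodule = Submodule.span ℝ {e 0, e 1, e 2} ∧
      (∀ x ∈ h, ⁅x, e 3⁆ ∈ h) ∧
      (∀ i j, g (e i) (e j) =
        (!![1,0,0,0; 0,1,0,0; 0,0,0,1; 0,0,1,0] : Matrix (Fin 4) (Fin 4) ℝ) i j) :=
  stmt_2_general g b hb h hdim v hsup hder hdeg
end

section
/- Let (e₁,e₂,e₃) be the standard basis of ℝ³, let g be the symmetric bilinear form on ℝ³ with Gram matrix diag(1,1,−1), and let α,β ∈ ℝ with α ≠ 0. Define the unique bilinear skew-symmetric bracket on ℝ³ (the Lie algebra 𝔤₁) by [e₁,e₂] = αe₁ − βe₃, [e₁,e₃] = −αe₁ − βe₂, [e₂,e₃] = βe₁ + αe₂ + αe₃. Then g is cyclic with respect to this bracket if and only if β = 0. -/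
theorem stmt_4 (α β : ℝ)
    (hα : α ≠ 0)
    (B : (Fin 3 → ℝ) →ₗ[ℝ] (Fin 3 → ℝ) →ₗ[ℝ] (Fin 3 → ℝ))
    (hskew : ∀ x y, B x y = -B y x)
    (e : Fin 3 → Fin 3 → ℝ) (he : ∀ i, e i = Pi.single i 1)
    (h12 : B (e 0) (e 1) = α • e 0 - β • e 2)
    (h13 : B (e 0) (e 2) = -α • e 0 - β • e 1)
    (h23 : B (e 1) (e 2) = β • e 0 + α • e 1 + α • e 2)
    (g : (Fin 3 → ℝ) → (Fin 3 → ℝ) → ℝ)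
    (hg : ∀ x y, g x y = x 0 * y 0 + x 1 * y 1 - x 2 * y 2) :
    (∀ x y z, g (B x y) z + g (B y z) x + g (B z x) y = 0) ↔ (β = 0) := by
  have hxx : ∀ x, B x x = 0 := by
    intro x
    have h := hskew x x
    have h2 : (2 : ℝ) • B x x = 0 := by
      rw [two_smul]
      nth_rewrite 2 [h]
      simp
    have := smul_eq_zero.mp h2
    rcases this with h' | h'
    · norm_num at h'
    · exact h'
  have hdec : ∀ v : Fin 3 → ℝ, v = v 0 • e 0 + v 1 • e 1 + v 2 • e 2 := by
    intro v
    funext i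
    fin_cases i <;> simp [he, Pi.single_apply]
  have key : ∀ x y : Fin 3 → ℝ, B x y =
      (x 0 * y 1 - x 1 * y 0) • B (e 0) (e 1) +
      (x 0 * y 2 - x 2 * y 0) • B (e 0) (e 2) +
      (x 1 * y 2 - x 2 * y 1) • B (e 1) (e 2) := by
    intro x y
    calc B x y = B (x 0 • e 0 + x 1 • e 1 + x 2 • e 2)
          (y 0 • e 0 + y 1 • e 1 + y 2 • e 2) := by rw [← hdec x, ← hdec y]
      _ = _ := by
          simp only [map_add, map_smul, LinearMap.add_apply, LinearMap.smul_apply,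
            hxx, hskew (e 1) (e 0), hskew (e 2) (e 0), hskew (e 2) (e 1), hxx (e 0),
            hxx (e 1), hxx (e 2)]
          module
  have hBval : ∀ x y : Fin 3 → ℝ, ∀ i, (B x y) i =
      (x 0 * y 1 - x 1 * y 0) * ((α • e 0 - β • e 2) i) +
      (x 0 * y 2 - x 2 * y 0) * ((-α • e 0 - β • e 1) i) +
      (x 1 * y 2 - x 2 * y 1) * ((β • e 0 + α • e 1 + α • e 2) i) := by
    intro x y i
    rw [key x y, h12, h13, h23]
    simp [smul_eq_mul]
    ring
  have he' : ∀ i j : Fin 3, e i j = if i = j then 1 else 0 := by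
    intro i j
    rw [he]
    simp [Pi.single_apply, eq_comm]
  constructor
  · intro h
    have h3 := h (e 0) (e 1) (e 2)
    rw [hg, hg, hg] at h3
    simp [hBval, he'] at h3
    linarith
  · intro hβ x y z
    subst hβ
    rw [hg, hg, hg]
    simp [hBval, he']
    ring
end

section
/- Let (e₁,e₂,e₃) be the standard basis of ℝ³, let g be the symmetric bilinear form on ℝ³ with Gram matrix diag(1,1,−1), and let α,β,γ ∈ ℝ with γ ≠ 0. Define the unique bilinear skew-symmetric bracket on ℝ³ (the Lie algebra 𝔤₂) by [e₁,e₂] = −γe₂ − βe₃, [e₁,e₃] = −βe₂ + γe₃, [e₂,e₃] = αe₁. Then g is cyclic with respect to this bracket if and only if α = −2β. -/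
theorem stmt_5 (α β γ : ℝ)
    (hγ : γ ≠ 0)
    (B : (Fin 3 → ℝ) →ₗ[ℝ] (Fin 3 → ℝ) →ₗ[ℝ] (Fin 3 → ℝ))
    (hskew : ∀ x y, B x y = -B y x)
    (e : Fin 3 → Fin 3 → ℝ) (he : ∀ i, e i = Pi.single i 1)
    (h12 : B (e 0) (e 1) = -γ • e 1 - β • e 2)
    (h13 : B (e 0) (e 2) = -β • e 1 + γ • e 2)
    (h23 : B (e 1) (e 2) = α • e 0)
    (g : (Fin 3 → ℝ) → (Fin 3 → ℝ) → ℝ)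
    (hg : ∀ x y, g x y = x 0 * y 0 + x 1 * y 1 - x 2 * y 2) :
    (∀ x y z, g (B x y) z + g (B y z) x + g (B z x) y = 0) ↔ (α = -2 * β) := by
  have hBxx : ∀ x, B x x = 0 := by
    intro x
    have h2 : (2:ℝ) • B x x = 0 := by
      rw [two_smul]; nth_rewrite 1 [hskew x x]; simp
    simpa using (smul_eq_zero.mp h2).resolve_left (by norm_num)
  have h21 : B (e 1) (e 0) = -(-γ • e 1 - β • e 2) := by rw [hskew, h12]
  have h31 : B (e 2) (e 0) = -(-β • e 1 + γ • e 2) := by rw [hskew, h13]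
  have h32 : B (e 2) (e 1) = -(α • e 0) := by rw [hskew, h23]
  have hexp : ∀ v : Fin 3 → ℝ, v = v 0 • e 0 + v 1 • e 1 + v 2 • e 2 := by
    intro v
    funext j
    fin_cases j <;> simp [he, Pi.single_apply]
  have hB : ∀ x y : Fin 3 → ℝ, B x y =
      ![α * (x 1 * y 2 - x 2 * y 1),
        -γ * (x 0 * y 1 - x 1 * y 0) - β * (x 0 * y 2 - x 2 * y 0),
        -β * (x 0 * y 1 - x 1 * y 0) + γ * (x 0 * y 2 - x 2 * y 0)] := by
    intro x y
    conv_lhs => rw [hexp x, hexp y]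
    simp only [map_add, map_smul, LinearMap.add_apply, LinearMap.smul_apply,
      hBxx, h12, h13, h23, h21, h31, h32]
    funext i
    fin_cases i <;>
      simp [he, Pi.single_apply] <;> ring
  constructor
  · intro h
    have := h (e 0) (e 1) (e 2)
    rw [hB, hB, hB, hg, hg, hg] at this
    simp [he, Pi.single_apply] at this
    linarith
  · intro h x y z
    rw [hB, hB, hB, hg, hg, hg]
    simp only [Matrix.cons_val_zero, Matrix.cons_val_one, Matrix.head_cons,
      Matrix.cons_val_two, Matrix.tail_cons]
    subst h
    ring
end

section
/- Let (e₁,e₂,e₃) be the standard basis of ℝ³, let g be the symmetric bilinear form on ℝ³ with Gram matrix diag(1,1,−1), and let α,β,γ ∈ ℝ. Define the unique bilinear skew-symmetric bracket on ℝ³ (the Lie algebra 𝔤₃) by [e₁,e₂] = −γe₃, [e₁,e₃] = −βe₂, [e₂,e₃] = αe₁. Then g is cyclic with respect to this bracket if and only if α + β + γ = 0. -/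
theorem stmt_6 (α β γ : ℝ)
    (B : (Fin 3 → ℝ) →ₗ[ℝ] (Fin 3 → ℝ) →ₗ[ℝ] (Fin 3 → ℝ))
    (hskew : ∀ x y, B x y = -B y x)
    (e : Fin 3 → Fin 3 → ℝ) (he : ∀ i, e i = Pi.single i 1)
    (h12 : B (e 0) (e 1) = -γ • e 2)
    (h13 : B (e 0) (e 2) = -β • e 1)
    (h23 : B (e 1) (e 2) = α • e 0)
    (g : (Fin 3 → ℝ) → (Fin 3 → ℝ) → ℝ)
    (hg : ∀ x y, g x y = x 0 * y 0 + x 1 * y 1 - x 2 * y 2) :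
    (∀ x y z, g (B x y) z + g (B y z) x + g (B z x) y = 0) ↔ (α + β + γ = 0) := by
  have hdiag : ∀ v, B v v = 0 := by
    intro v
    funext i
    have h := congrFun (hskew v v) i
    simp only [Pi.neg_apply] at h
    show B v v i = (0 : Fin 3 → ℝ) i
    simp only [Pi.zero_apply]
    linarith
  have h21 : B (e 1) (e 0) = γ • e 2 := by rw [hskew, h12]; module
  have h31 : B (e 2) (e 0) = β • e 1 := by rw [hskew, h13]; module
  have h32 : B (e 2) (e 1) = -α • e 0 := by rw [hskew, h23]; module
  have hdecomp : ∀ v : Fin 3 → ℝ, v = v 0 • e 0 + v 1 • e 1 + v 2 • e 2 := by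
    intro v
    funext i
    simp only [he, Pi.add_apply, Pi.smul_apply, smul_eq_mul]
    fin_cases i <;> simp
  constructor
  · intro h
    have h0 := h (e 0) (e 1) (e 2)
    rw [h12, h23, hskew, h13] at h0
    simp only [hg, neg_smul, Pi.neg_apply, Pi.smul_apply, smul_eq_mul] at h0
    simp only [he, Pi.single_apply] at h0
    simp only [show ((0:Fin 3) = 1) = False by simp, show ((0:Fin 3) = 2) = False by simp,
      show ((1:Fin 3) = 0) = False by simp, show ((1:Fin 3) = 2) = False by simp,
      show ((2:Fin 3) = 0) = False by simp, show ((2:Fin 3) = 1) = False by simp,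
      eq_self_iff_true, if_true, if_false] at h0
    linarith
  · intro h x y z
    rw [hdecomp x, hdecomp y, hdecomp z]
    simp only [map_add, map_smul, LinearMap.add_apply, LinearMap.smul_apply,
      h12, h13, h23, h21, h31, h32, hdiag, smul_zero, zero_add, add_zero]
    simp only [hg, Pi.add_apply, Pi.smul_apply, smul_eq_mul, neg_smul, Pi.neg_apply]
    simp only [he, Pi.single_apply]
    simp only [show ((0:Fin 3) = 1) = False by simp, show ((0:Fin 3) = 2) = False by simp,
      show ((1:Fin 3) = 0) = False by simp, show ((1:Fin 3) = 2) = False by simp,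
      show ((2:Fin 3) = 0) = False by simp, show ((2:Fin 3) = 1) = False by simp,
      eq_self_iff_true, if_true, if_false]
    linear_combination (x 0 * y 1 * z 2 - x 0 * y 2 * z 1 - x 1 * y 0 * z 2
      + x 1 * y 2 * z 0 + x 2 * y 0 * z 1 - x 2 * y 1 * z 0) * h
end

section
/- Let (e₁,e₂,e₃) be the standard basis of ℝ³, let g be the symmetric bilinear form on ℝ³ with Gram matrix diag(1,1,−1), let ε ∈ {1,−1} and α,β ∈ ℝ. Define the unique bilinear skew-symmetric bracket on ℝ³ (the Lie algebra 𝔤₄) by [e₁,e₂] = −e₂ + (2ε − β)e₃, [e₁,e₃] = −βe₂ + e₃, [e₂,e₃] = αe₁. Then g is cyclic with respect to this bracket if and only if α = 2(ε − β). -/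
set_option maxHeartbeats 1600000 in
theorem stmt_7 (ε α β : ℝ)
    (hε : ε = 1 ∨ ε = -1)
    (B : (Fin 3 → ℝ) →ₗ[ℝ] (Fin 3 → ℝ) →ₗ[ℝ] (Fin 3 → ℝ))
    (hskew : ∀ x y, B x y = -B y x)
    (e : Fin 3 → Fin 3 → ℝ) (he : ∀ i, e i = Pi.single i 1)
    (h12 : B (e 0) (e 1) = -e 1 + (2 * ε - β) • e 2)
    (h13 : B (e 0) (e 2) = -β • e 1 + e 2)
    (h23 : B (e 1) (e 2) = α • e 0)
    (g : (Fin 3 → ℝ) → (Fin 3 → ℝ) → ℝ)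
    (hg : ∀ x y, g x y = x 0 * y 0 + x 1 * y 1 - x 2 * y 2) :
    (∀ x y z, g (B x y) z + g (B y z) x + g (B z x) y = 0) ↔ (α = 2 * (ε - β)) := by
  have hzero : ∀ x, B x x = 0 := by
    intro x
    have h := hskew x x
    have : B x x + B x x = 0 := by
      nth_rewrite 2 [h]; abel
    funext i
    have hi := congrFun this i
    simp only [Pi.add_apply, Pi.zero_apply] at hi
    have : (B x x) i = 0 := by linarith
    simpa using this
  have hrep : ∀ x : Fin 3 → ℝ, x = x 0 • e 0 + x 1 • e 1 + x 2 • e 2 := by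
    intro x
    funext i
    fin_cases i <;> simp [he, Pi.single_apply]
  have hBgen : ∀ (a b c d f k : ℝ),
      B (a • e 0 + b • e 1 + c • e 2) (d • e 0 + f • e 1 + k • e 2) =
        (a * f - b * d) • B (e 0) (e 1) + (a * k - c * d) • B (e 0) (e 2)
          + (b * k - c * f) • B (e 1) (e 2) := by
    intro a b c d f k
    simp only [map_add, map_smul, LinearMap.add_apply, LinearMap.smul_apply]
    rw [hzero (e 0), hzero (e 1), hzero (e 2), hskew (e 1) (e 0),
      hskew (e 2) (e 0), hskew (e 2) (e 1)]
    module
  constructor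
  · intro h
    have h0 := h (e 0) (e 1) (e 2)
    rw [h12, h23, hskew (e 2) (e 0), h13] at h0
    simp only [hg, he] at h0
    simp [Pi.single_apply] at h0
    linarith
  · intro hα x y z
    obtain ⟨a, b, c, hx⟩ : ∃ a b c, x = a • e 0 + b • e 1 + c • e 2 :=
      ⟨x 0, x 1, x 2, hrep x⟩
    obtain ⟨d, f, k, hy⟩ : ∃ d f k, y = d • e 0 + f • e 1 + k • e 2 :=
      ⟨y 0, y 1, y 2, hrep y⟩
    obtain ⟨p, q, r, hz⟩ : ∃ p q r, z = p • e 0 + q • e 1 + r • e 2 :=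
      ⟨z 0, z 1, z 2, hrep z⟩
    rw [hx, hy, hz, hBgen, hBgen, hBgen, h12, h13, h23]
    have hev : ∀ i j : Fin 3, e i j = if i = j then 1 else 0 := by
      intro i j
      rw [he]
      simp [Pi.single_apply, eq_comm]
    simp only [hg, Pi.add_apply, Pi.smul_apply, Pi.neg_apply, smul_eq_mul, hev]
    norm_num [Fin.ext_iff]
    subst hα
    ring
end

section
/- Let (e₁,e₂,e₃) be the standard basis of ℝ³, let g be the symmetric bilinear form on ℝ³ with Gram matrix diag(1,1,−1), and let α,β,γ,δ ∈ ℝ with α + δ ≠ 0 and αγ + βδ = 0. Define the unique bilinear skew-symmetric bracket on ℝ³ (the Lie algebra 𝔤₅) by [e₁,e₂] = 0, [e₁,e₃] = αe₁ + βe₂, [e₂,e₃] = γe₁ + δe₂. Then g is cyclic with respect to this bracket if and only if β = γ. -/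
theorem stmt_8 (α β γ δ : ℝ)
    (had : α + δ ≠ 0)
    (hcomp : α * γ + β * δ = 0)
    (B : (Fin 3 → ℝ) →ₗ[ℝ] (Fin 3 → ℝ) →ₗ[ℝ] (Fin 3 → ℝ))
    (hskew : ∀ x y, B x y = -B y x)
    (e : Fin 3 → Fin 3 → ℝ) (he : ∀ i, e i = Pi.single i 1)
    (h12 : B (e 0) (e 1) = 0)
    (h13 : B (e 0) (e 2) = α • e 0 + β • e 1)
    (h23 : B (e 1) (e 2) = γ • e 0 + δ • e 1)
    (g : (Fin 3 → ℝ) → (Fin 3 → ℝ) → ℝ)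
    (hg : ∀ x y, g x y = x 0 * y 0 + x 1 * y 1 - x 2 * y 2) :
    (∀ x y z, g (B x y) z + g (B y z) x + g (B z x) y = 0) ↔ (β = γ) := by
  have hzero : ∀ x, B x x = 0 := by
    intro x
    have h := hskew x x
    have h2 : (2 : ℝ) • B x x = 0 := by
      rw [two_smul]; nth_rewrite 2 [h]; simp
    rcases smul_eq_zero.mp h2 with h' | h'
    · norm_num at h'
    · exact h'
  have h21 : B (e 1) (e 0) = 0 := by rw [hskew, h12]; simp
  have h31 : B (e 2) (e 0) = -(α • e 0 + β • e 1) := by rw [hskew, h13]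
  have h32 : B (e 2) (e 1) = -(γ • e 0 + δ • e 1) := by rw [hskew, h23]
  have hB : ∀ a b c a' b' c' : ℝ,
      B (a • e 0 + b • e 1 + c • e 2) (a' • e 0 + b' • e 1 + c' • e 2) =
        (a * c' - c * a') • (α • e 0 + β • e 1) +
          (b * c' - c * b') • (γ • e 0 + δ • e 1) := by
    intro a b c a' b' c'
    simp only [map_add, map_smul, LinearMap.add_apply, LinearMap.smul_apply,
      hzero, h12, h21, h13, h23, h31, h32]
    module
  have hx : ∀ x : Fin 3 → ℝ, x = x 0 • e 0 + x 1 • e 1 + x 2 • e 2 := by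
    intro x
    funext i
    fin_cases i <;> simp [he, Pi.single_apply]
  have he00 : e 0 0 = 1 := by simp [he, Pi.single_apply]
  have he01 : e 0 1 = 0 := by simp [he, Pi.single_apply]
  have he02 : e 0 2 = 0 := by simp [he, Pi.single_apply]
  have he10 : e 1 0 = 0 := by simp [he, Pi.single_apply]
  have he11 : e 1 1 = 1 := by simp [he, Pi.single_apply]
  have he12 : e 1 2 = 0 := by simp [he, Pi.single_apply]
  have he20 : e 2 0 = 0 := by simp [he, Pi.single_apply]
  have he21 : e 2 1 = 0 := by simp [he, Pi.single_apply]
  have he22 : e 2 2 = 1 := by simp [he, Pi.single_apply]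
  constructor
  · intro h
    have hc := h (e 0) (e 1) (e 2)
    rw [hskew (e 2) (e 0), h12, h13, h23] at hc
    simp only [hg, Pi.add_apply, Pi.smul_apply, Pi.neg_apply, Pi.zero_apply, smul_eq_mul,
      he00, he01, he02, he10, he11, he12, he20, he21, he22] at hc
    linarith
  · intro hbg x y z
    rw [hx x, hx y, hx z, hB, hB, hB]
    simp only [hg, Pi.add_apply, Pi.smul_apply, smul_eq_mul,
      he00, he01, he02, he10, he11, he12, he20, he21, he22]
    rw [hbg]
    ring
end

section
/- Let (e₁,e₂,e₃) be the standard basis of ℝ³, let g be the symmetric bilinear form on ℝ³ with Gram matrix diag(1,1,−1), and let α,β,γ,δ ∈ ℝ with α + δ ≠ 0 and αγ − βδ = 0. Define the unique bilinear skew-symmetric bracket on ℝ³ (the Lie algebra 𝔤₆) by [e₁,e₂] = αe₂ + βe₃, [e₁,e₃] = γe₂ + δe₃, [e₂,e₃] = 0. Then g is cyclic with respect to this bracket if and only if β = −γ. -/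
theorem stmt_9 (α β γ δ : ℝ)
    (had : α + δ ≠ 0)
    (hcomp : α * γ - β * δ = 0)
    (B : (Fin 3 → ℝ) →ₗ[ℝ] (Fin 3 → ℝ) →ₗ[ℝ] (Fin 3 → ℝ))
    (hskew : ∀ x y, B x y = -B y x)
    (e : Fin 3 → Fin 3 → ℝ) (he : ∀ i, e i = Pi.single i 1)
    (h12 : B (e 0) (e 1) = α • e 1 + β • e 2)
    (h13 : B (e 0) (e 2) = γ • e 1 + δ • e 2)
    (h23 : B (e 1) (e 2) = 0)
    (g : (Fin 3 → ℝ) → (Fin 3 → ℝ) → ℝ)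
    (hg : ∀ x y, g x y = x 0 * y 0 + x 1 * y 1 - x 2 * y 2) :
    (∀ x y z, g (B x y) z + g (B y z) x + g (B z x) y = 0) ↔ (β = -γ) := by
  have hBxx : ∀ x, B x x = 0 := by
    intro x
    have h := hskew x x
    have : B x x + B x x = 0 := by nth_rewrite 2 [h]; exact add_neg_cancel _
    have h2 : (2 : ℝ) • B x x = 0 := by rw [two_smul]; exact this
    simpa using smul_eq_zero.mp h2 |>.resolve_left (by norm_num)
  have h21 : B (e 1) (e 0) = -(α • e 1 + β • e 2) := by rw [hskew, h12]
  have h31 : B (e 2) (e 0) = -(γ • e 1 + δ • e 2) := by rw [hskew, h13]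
  have h32 : B (e 2) (e 1) = 0 := by rw [hskew, h23]; simp
  have hxdecomp : ∀ x : Fin 3 → ℝ, x = x 0 • e 0 + x 1 • e 1 + x 2 • e 2 := by
    intro x
    funext i
    fin_cases i <;> simp [he, Pi.single_apply]
  have hB : ∀ x y : Fin 3 → ℝ, B x y =
      (x 0 * y 1 - x 1 * y 0) • (α • e 1 + β • e 2) +
      (x 0 * y 2 - x 2 * y 0) • (γ • e 1 + δ • e 2) := by
    intro x y
    conv_lhs => rw [hxdecomp x, hxdecomp y]
    simp only [map_add, map_smul, LinearMap.add_apply, LinearMap.smul_apply,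
      h12, h13, h23, h21, h31, h32, hBxx (e 0), hBxx (e 1), hBxx (e 2)]
    module
  constructor
  · intro hcyc
    have h := hcyc (e 0) (e 1) (e 2)
    rw [h12, h23, h31, hg, hg, hg] at h
    simp [he, Pi.single_apply] at h
    linarith
  · intro hβ x y z
    rw [hg, hg, hg, hB x y, hB y z, hB z x, hβ]
    simp [he, Pi.single_apply]
    ring
end

section
/- Let (e₁,e₂,e₃) be the standard basis of ℝ³, let g be the symmetric bilinear form on ℝ³ with Gram matrix diag(1,1,−1), and let α,β,γ,δ ∈ ℝ with α + δ ≠ 0 and αγ = 0. Define the unique bilinear skew-symmetric bracket on ℝ³ (the Lie algebra 𝔤₇) by [e₁,e₂] = −αe₁ − βe₂ − βe₃, [e₁,e₃] = αe₁ + βe₂ + βe₃, [e₂,e₃] = γe₁ + δe₂ + δe₃. Then g is cyclic with respect to this bracket if and only if γ = 0. -/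
/-!
When the bracket `B` is alternating, the cyclic sum `g([x,y],z) + g([y,z],x) + g([z,x],y)` is an
alternating trilinear form for any bilinear `g`. In dimension three such a form is a multiple of
the determinant, so it vanishes identically iff it vanishes on `(e₁, e₂, e₃)`, where for `𝔤₇` its
value is `β + γ - β = γ`.
-/

open Matrix

section CyclicForm

variable {R M : Type*} [CommRing R] [AddCommGroup M] [Module R M]

def IsCyclicForm (G : M →ₗ[R] M →ₗ[R] R) (B : M →ₗ[R] M →ₗ[R] M) : Prop :=
  ∀ x y z, G (B x y) z + G (B y z) x + G (B z x) y = 0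

def cyclicForm (G : M →ₗ[R] M →ₗ[R] R) {B : M →ₗ[R] M →ₗ[R] M} (hB : B.IsAlt) :
    M [⋀^Fin 3]→ₗ[R] R where
  toMultilinearMap := MultilinearMap.mk'
    (fun v => G (B (v 0) (v 1)) (v 2) + G (B (v 1) (v 2)) (v 0) + G (B (v 2) (v 0)) (v 1))
    (fun v i x y => by fin_cases i <;> simp <;> ring)
    (fun v i c x => by fin_cases i <;> simp <;> ring)
  map_eq_zero_of_eq' v i j hv hij := by
    change G (B (v 0) (v 1)) (v 2) + G (B (v 1) (v 2)) (v 0) + G (B (v 2) (v 0)) (v 1) = 0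
    fin_cases i <;> fin_cases j <;> simp at hij hv
    all_goals
      simp only [hv, hB.self_eq_zero, map_zero, LinearMap.zero_apply, zero_add, add_zero]
      rw [← hB.neg]
      simp

theorem isCyclicForm_iff_cyclicForm_eq_zero (G : M →ₗ[R] M →ₗ[R] R) {B : M →ₗ[R] M →ₗ[R] M}
    (hB : B.IsAlt) : IsCyclicForm G B ↔ cyclicForm G hB = 0 :=
  ⟨fun h => AlternatingMap.ext fun v => h (v 0) (v 1) (v 2),
    fun h x y z => congr($h ![x, y, z])⟩

theorem isCyclicForm_iff_basis (G : M →ₗ[R] M →ₗ[R] R) {B : M →ₗ[R] M →ₗ[R] M}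
    (hB : B.IsAlt) (b : Module.Basis (Fin 3) R M) :
    IsCyclicForm G B ↔
      G (B (b 0) (b 1)) (b 2) + G (B (b 1) (b 2)) (b 0) + G (B (b 2) (b 0)) (b 1) = 0 := by
  rw [isCyclicForm_iff_cyclicForm_eq_zero G hB, ← AlternatingMap.map_basis_eq_zero_iff b]
  rfl

end CyclicForm

theorem Matrix.toBilin'_diagonal_apply {R n : Type*} [CommRing R] [Fintype n] [DecidableEq n]
    (d : n → R) (x y : n → R) : toBilin' (diagonal d) x y = ∑ i, d i * x i * y i := by
  simp [toBilin'_apply', dotProduct, mulVec_diagonal, mul_left_comm, mul_assoc]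

theorem stmt_10_general (α β γ δ : ℝ)
    (B : (Fin 3 → ℝ) →ₗ[ℝ] (Fin 3 → ℝ) →ₗ[ℝ] (Fin 3 → ℝ))
    (hskew : ∀ x y, B x y = -B y x)
    (e : Fin 3 → Fin 3 → ℝ) (he : ∀ i, e i = Pi.single i 1)
    (h12 : B (e 0) (e 1) = -α • e 0 - β • e 1 - β • e 2)
    (h13 : B (e 0) (e 2) = α • e 0 + β • e 1 + β • e 2)
    (h23 : B (e 1) (e 2) = γ • e 0 + δ • e 1 + δ • e 2)
    (g : (Fin 3 → ℝ) → (Fin 3 → ℝ) → ℝ)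
    (hg : ∀ x y, g x y = x 0 * y 0 + x 1 * y 1 - x 2 * y 2) :
    (∀ x y z, g (B x y) z + g (B y z) x + g (B z x) y = 0) ↔ (γ = 0) := by
  set G := toBilin' (diagonal ![(1 : ℝ), 1, -1])
  have hgG : ∀ x y, g x y = G x y := fun x y => by
    simp [G, hg, toBilin'_diagonal_apply, Fin.sum_univ_three, sub_eq_add_neg]
  have hB : B.IsAlt := fun x => self_eq_neg.mp (hskew x x)
  have hbasis : ⇑(Pi.basisFun ℝ (Fin 3)) = e := funext fun i => by simp [he]
  have h20 : B (e 2) (e 0) = -α • e 0 - β • e 1 - β • e 2 := by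
    rw [hskew, h13]; module
  have hvalue :
      G (B (e 0) (e 1)) (e 2) + G (B (e 1) (e 2)) (e 0) + G (B (e 2) (e 0)) (e 1) = γ := by
    rw [h12, h23, h20]
    simp [G, he]
  simp only [hgG]
  show IsCyclicForm G B ↔ γ = 0
  rw [isCyclicForm_iff_basis G hB (Pi.basisFun ℝ (Fin 3)), hbasis, hvalue]

theorem stmt_10 (α β γ δ : ℝ)
    (had : α + δ ≠ 0)
    (hcomp : α * γ = 0)
    (B : (Fin 3 → ℝ) →ₗ[ℝ] (Fin 3 → ℝ) →ₗ[ℝ] (Fin 3 → ℝ))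
    (hskew : ∀ x y, B x y = -B y x)
    (e : Fin 3 → Fin 3 → ℝ) (he : ∀ i, e i = Pi.single i 1)
    (h12 : B (e 0) (e 1) = -α • e 0 - β • e 1 - β • e 2)
    (h13 : B (e 0) (e 2) = α • e 0 + β • e 1 + β • e 2)
    (h23 : B (e 1) (e 2) = γ • e 0 + δ • e 1 + δ • e 2)
    (g : (Fin 3 → ℝ) → (Fin 3 → ℝ) → ℝ)
    (hg : ∀ x y, g x y = x 0 * y 0 + x 1 * y 1 - x 2 * y 2) :
    (∀ x y z, g (B x y) z + g (B y z) x + g (B z x) y = 0) ↔ (γ = 0) :=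
  stmt_10_general α β γ δ B hskew e he h12 h13 h23 g hg
end

section
/- Let (e₁,e₂,e₃,e₄) be the standard basis of ℝ⁴, let g be the symmetric bilinear form on ℝ⁴ with Gram matrix diag(1,1,−1,1), let α,β ∈ ℝ with α ≠ 0, and let c₁,c₂,c₃,p₁,p₂,p₃,q₁,q₂,q₃ ∈ ℝ. Define the unique bilinear skew-symmetric bracket on ℝ⁴ by [e₁,e₂] = αe₁ − βe₃, [e₁,e₃] = −αe₁ − βe₂, [e₂,e₃] = βe₁ + αe₂ + αe₃, [e₁,e₄] = c₁e₁ + c₂e₂ + c₃e₃, [e₂,e₄] = p₁e₁ + p₂e₂ + p₃e₃, [e₃,e₄] = q₁e₁ + q₂e₂ + q₃e₃. Then g is cyclic with respect to this bracket if and only if β = 0, c₂ = p₁, c₃ = −q₁, and p₃ = −q₂. -/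
theorem stmt_12 (α β c₁ c₂ c₃ p₁ p₂ p₃ q₁ q₂ q₃ : ℝ)
    (hα : α ≠ 0)
    (B : (Fin 4 → ℝ) →ₗ[ℝ] (Fin 4 → ℝ) →ₗ[ℝ] (Fin 4 → ℝ))
    (hskew : ∀ x y, B x y = -B y x)
    (e : Fin 4 → Fin 4 → ℝ) (he : ∀ i, e i = Pi.single i 1)
    (h12 : B (e 0) (e 1) = α • e 0 - β • e 2)
    (h13 : B (e 0) (e 2) = -α • e 0 - β • e 1)
    (h23 : B (e 1) (e 2) = β • e 0 + α • e 1 + α • e 2)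
    (h14 : B (e 0) (e 3) = c₁ • e 0 + c₂ • e 1 + c₃ • e 2)
    (h24 : B (e 1) (e 3) = p₁ • e 0 + p₂ • e 1 + p₃ • e 2)
    (h34 : B (e 2) (e 3) = q₁ • e 0 + q₂ • e 1 + q₃ • e 2)
    (g : (Fin 4 → ℝ) → (Fin 4 → ℝ) → ℝ)
    (hg : ∀ x y, g x y = x 0 * y 0 + x 1 * y 1 - x 2 * y 2 + x 3 * y 3) :
    (∀ x y z, g (B x y) z + g (B y z) x + g (B z x) y = 0) ↔ (β = 0 ∧ c₂ = p₁ ∧ c₃ = -q₁ ∧ p₃ = -q₂) := by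
  have hzero : ∀ v, B v v = 0 := by
    intro v
    have h := hskew v v
    have h2 : (2:ℝ) • B v v = 0 := by
      rw [two_smul]; nth_rewrite 1 [h]; simp
    simpa using (smul_eq_zero.mp h2).resolve_left (by norm_num)
  have hdecomp : ∀ x : Fin 4 → ℝ, x = x 0 • e 0 + x 1 • e 1 + x 2 • e 2 + x 3 • e 3 := by
    intro x; funext i; fin_cases i <;> simp +decide [he, Pi.single_apply]
  have hBB : ∀ x y, B x y = (x 0*y 1 - x 1*y 0) • B (e 0) (e 1)
      + (x 0*y 2 - x 2*y 0) • B (e 0) (e 2) + (x 1*y 2 - x 2*y 1) • B (e 1) (e 2)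
      + (x 0*y 3 - x 3*y 0) • B (e 0) (e 3) + (x 1*y 3 - x 3*y 1) • B (e 1) (e 3)
      + (x 2*y 3 - x 3*y 2) • B (e 2) (e 3) := by
    intro x y
    conv_lhs => rw [hdecomp x, hdecomp y]
    simp only [map_add, map_smul, LinearMap.add_apply, LinearMap.smul_apply, hzero,
      hskew (e 1) (e 0), hskew (e 2) (e 0), hskew (e 2) (e 1),
      hskew (e 3) (e 0), hskew (e 3) (e 1), hskew (e 3) (e 2)]
    module
  have hB0 : ∀ x y, B x y 0 = (x 0*y 1 - x 1*y 0)*α + (x 0*y 2 - x 2*y 0)*(-α)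
      + (x 1*y 2 - x 2*y 1)*β + (x 0*y 3 - x 3*y 0)*c₁ + (x 1*y 3 - x 3*y 1)*p₁
      + (x 2*y 3 - x 3*y 2)*q₁ := by
    intro x y
    rw [hBB x y, h12, h13, h23, h14, h24, h34]
    simp +decide [he, Pi.single_apply]
  have hB1 : ∀ x y, B x y 1 = (x 0*y 2 - x 2*y 0)*(-β)
      + (x 1*y 2 - x 2*y 1)*α + (x 0*y 3 - x 3*y 0)*c₂ + (x 1*y 3 - x 3*y 1)*p₂
      + (x 2*y 3 - x 3*y 2)*q₂ := by
    intro x y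
    rw [hBB x y, h12, h13, h23, h14, h24, h34]
    simp +decide [he, Pi.single_apply]
  have hB2 : ∀ x y, B x y 2 = (x 0*y 1 - x 1*y 0)*(-β)
      + (x 1*y 2 - x 2*y 1)*α + (x 0*y 3 - x 3*y 0)*c₃ + (x 1*y 3 - x 3*y 1)*p₃
      + (x 2*y 3 - x 3*y 2)*q₃ := by
    intro x y
    rw [hBB x y, h12, h13, h23, h14, h24, h34]
    simp +decide [he, Pi.single_apply]
  have hB3 : ∀ x y, B x y 3 = 0 := by
    intro x y
    rw [hBB x y, h12, h13, h23, h14, h24, h34]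
    simp +decide [he, Pi.single_apply]
  have hgB : ∀ x y z, g (B x y) z =
      (B x y 0) * z 0 + (B x y 1) * z 1 - (B x y 2) * z 2 + (B x y 3) * z 3 := by
    intro x y z; rw [hg]
  constructor
  · intro h
    have h1 := h (e 0) (e 1) (e 2)
    have h2 := h (e 0) (e 1) (e 3)
    have h3 := h (e 0) (e 2) (e 3)
    have h4 := h (e 1) (e 2) (e 3)
    simp only [hgB, hB0, hB1, hB2, hB3] at h1 h2 h3 h4
    simp +decide [he, Pi.single_apply] at h1 h2 h3 h4
    refine ⟨by linarith, by linarith, by linarith, by linarith⟩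
  · rintro ⟨hβ, hc2, hc3, hp3⟩
    intro x y z
    rw [hgB, hgB, hgB, hB0, hB1, hB2, hB3, hB0, hB1, hB2, hB3, hB0, hB1, hB2, hB3]
    subst hβ hc2 hc3 hp3
    ring
end

section
/- Let (e₁,e₂,e₃,e₄) be the standard basis of ℝ⁴, let g be the symmetric bilinear form on ℝ⁴ with Gram matrix diag(1,1,−1,1), let α,β,γ ∈ ℝ with γ ≠ 0, and let c₁,c₂,c₃,p₁,p₂,p₃,q₁,q₂,q₃ ∈ ℝ. Define the unique bilinear skew-symmetric bracket on ℝ⁴ by [e₁,e₂] = −γe₂ − βe₃, [e₁,e₃] = −βe₂ + γe₃, [e₂,e₃] = αe₁, [e₁,e₄] = c₁e₁ + c₂e₂ + c₃e₃, [e₂,e₄] = p₁e₁ + p₂e₂ + p₃e₃, [e₃,e₄] = q₁e₁ + q₂e₂ + q₃e₃. Then g is cyclic with respect to this bracket if and only if α = −2β, c₂ = p₁, c₃ = −q₁, and p₃ = −q₂. -/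
theorem stmt_13 (α β γ c₁ c₂ c₃ p₁ p₂ p₃ q₁ q₂ q₃ : ℝ)
    (hγ : γ ≠ 0)
    (B : (Fin 4 → ℝ) →ₗ[ℝ] (Fin 4 → ℝ) →ₗ[ℝ] (Fin 4 → ℝ))
    (hskew : ∀ x y, B x y = -B y x)
    (e : Fin 4 → Fin 4 → ℝ) (he : ∀ i, e i = Pi.single i 1)
    (h12 : B (e 0) (e 1) = -γ • e 1 - β • e 2)
    (h13 : B (e 0) (e 2) = -β • e 1 + γ • e 2)
    (h23 : B (e 1) (e 2) = α • e 0)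
    (h14 : B (e 0) (e 3) = c₁ • e 0 + c₂ • e 1 + c₃ • e 2)
    (h24 : B (e 1) (e 3) = p₁ • e 0 + p₂ • e 1 + p₃ • e 2)
    (h34 : B (e 2) (e 3) = q₁ • e 0 + q₂ • e 1 + q₃ • e 2)
    (g : (Fin 4 → ℝ) → (Fin 4 → ℝ) → ℝ)
    (hg : ∀ x y, g x y = x 0 * y 0 + x 1 * y 1 - x 2 * y 2 + x 3 * y 3) :
    (∀ x y z, g (B x y) z + g (B y z) x + g (B z x) y = 0) ↔ (α = -2 * β ∧ c₂ = p₁ ∧ c₃ = -q₁ ∧ p₃ = -q₂) := by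
  have hzero : ∀ v, B v v = 0 := by
    intro v
    funext i
    have h := congrFun (hskew v v) i
    simp only [Pi.neg_apply] at h
    have : B v v i = 0 := by linarith
    simpa using this
  have h21 : B (e 1) (e 0) = -(-γ • e 1 - β • e 2) := by rw [hskew (e 1) (e 0), h12]
  have h31 : B (e 2) (e 0) = -(-β • e 1 + γ • e 2) := by rw [hskew (e 2) (e 0), h13]
  have h32 : B (e 2) (e 1) = -(α • e 0) := by rw [hskew (e 2) (e 1), h23]
  have h41 : B (e 3) (e 0) = -(c₁ • e 0 + c₂ • e 1 + c₃ • e 2) := by rw [hskew (e 3) (e 0), h14]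
  have h42 : B (e 3) (e 1) = -(p₁ • e 0 + p₂ • e 1 + p₃ • e 2) := by rw [hskew (e 3) (e 1), h24]
  have h43 : B (e 3) (e 2) = -(q₁ • e 0 + q₂ • e 1 + q₃ • e 2) := by rw [hskew (e 3) (e 2), h34]
  constructor
  · intro H
    have H1 := H (e 0) (e 1) (e 2)
    have H2 := H (e 0) (e 1) (e 3)
    have H3 := H (e 0) (e 2) (e 3)
    have H4 := H (e 1) (e 2) (e 3)
    rw [h12, h23, h31] at H1
    rw [h12, h24, h41] at H2
    rw [h13, h34, h41] at H3
    rw [h23, h34, h42] at H4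
    simp [hg, he, Pi.single_apply] at H1 H2 H3 H4
    refine ⟨by linarith, by linarith, by linarith, by linarith⟩
  · rintro ⟨hα, hc₂, hc₃, hp₃⟩
    subst hα hc₂ hc₃ hp₃
    intro x y z
    have hd : ∀ v : Fin 4 → ℝ, v = v 0 • e 0 + v 1 • e 1 + v 2 • e 2 + v 3 • e 3 := by
      intro v
      funext j
      fin_cases j <;> simp [he, Pi.single_apply]
    rw [hd x, hd y, hd z]
    simp only [map_add, map_smul, LinearMap.add_apply, LinearMap.smul_apply,
      hzero, h12, h13, h23, h14, h24, h34, h21, h31, h32, h41, h42, h43]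
    simp [hg, he, Pi.single_apply, smul_eq_mul]
    ring
end

section
/- Let (e₁,e₂,e₃,e₄) be the standard basis of ℝ⁴ and let g be the symmetric bilinear form on ℝ⁴ with Gram matrix [[1,0,0,0],[0,1,0,0],[0,0,0,1],[0,0,1,0]] (so the restriction of g to span(e₁,e₂,e₃) is degenerate). Let c₁,c₂,c₃,p₁,p₂,p₃,q₁,q₂,q₃ ∈ ℝ and define the unique bilinear skew-symmetric bracket on ℝ⁴ by [e₁,e₂] = [e₁,e₃] = [e₂,e₃] = 0, [e₁,e₄] = c₁e₁ + c₂e₂ + c₃e₃, [e₂,e₄] = p₁e₁ + p₂e₂ + p₃e₃, [e₃,e₄] = q₁e₁ + q₂e₂ + q₃e₃. Then g is cyclic with respect to this bracket if and only if c₂ = p₁, q₁ = 0, and q₂ = 0. -/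
theorem stmt_16 (c₁ c₂ c₃ p₁ p₂ p₃ q₁ q₂ q₃ : ℝ)
    (B : (Fin 4 → ℝ) →ₗ[ℝ] (Fin 4 → ℝ) →ₗ[ℝ] (Fin 4 → ℝ))
    (hskew : ∀ x y, B x y = -B y x)
    (e : Fin 4 → Fin 4 → ℝ) (he : ∀ i, e i = Pi.single i 1)
    (h12 : B (e 0) (e 1) = 0)
    (h13 : B (e 0) (e 2) = 0)
    (h23 : B (e 1) (e 2) = 0)
    (h14 : B (e 0) (e 3) = c₁ • e 0 + c₂ • e 1 + c₃ • e 2)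
    (h24 : B (e 1) (e 3) = p₁ • e 0 + p₂ • e 1 + p₃ • e 2)
    (h34 : B (e 2) (e 3) = q₁ • e 0 + q₂ • e 1 + q₃ • e 2)
    (g : (Fin 4 → ℝ) → (Fin 4 → ℝ) → ℝ)
    (hg : ∀ x y, g x y = x 0 * y 0 + x 1 * y 1 + x 2 * y 3 + x 3 * y 2) :
    (∀ x y z, g (B x y) z + g (B y z) x + g (B z x) y = 0) ↔ (c₂ = p₁ ∧ q₁ = 0 ∧ q₂ = 0) := by
  have hdiag : ∀ x, B x x = 0 := fun x => by
    have h2 : (2 : ℝ) • B x x = 0 := by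
      rw [two_smul]; exact add_eq_zero_iff_eq_neg.mpr (hskew x x)
    simpa using h2
  have h21 : B (e 1) (e 0) = 0 := by rw [hskew, h12]; simp
  have h31 : B (e 2) (e 0) = 0 := by rw [hskew, h13]; simp
  have h32 : B (e 2) (e 1) = 0 := by rw [hskew, h23]; simp
  have h41 : B (e 3) (e 0) = -(c₁ • e 0 + c₂ • e 1 + c₃ • e 2) := by rw [hskew, h14]
  have h42 : B (e 3) (e 1) = -(p₁ • e 0 + p₂ • e 1 + p₃ • e 2) := by rw [hskew, h24]
  have h43 : B (e 3) (e 2) = -(q₁ • e 0 + q₂ • e 1 + q₃ • e 2) := by rw [hskew, h34]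
  have hx : ∀ v : Fin 4 → ℝ, v = v 0 • e 0 + v 1 • e 1 + v 2 • e 2 + v 3 • e 3 := by
    intro v
    funext k
    simp only [he, Pi.add_apply, Pi.smul_apply, smul_eq_mul]
    fin_cases k <;> simp
  have hB : ∀ x y : Fin 4 → ℝ, B x y =
      (x 0 * y 3 - x 3 * y 0) • (c₁ • e 0 + c₂ • e 1 + c₃ • e 2) +
      (x 1 * y 3 - x 3 * y 1) • (p₁ • e 0 + p₂ • e 1 + p₃ • e 2) +
      (x 2 * y 3 - x 3 * y 2) • (q₁ • e 0 + q₂ • e 1 + q₃ • e 2) := by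
    intro x y
    conv_lhs => rw [hx x, hx y]
    simp only [map_add, map_smul, LinearMap.add_apply, LinearMap.smul_apply,
      h12, h13, h23, h14, h24, h34, h21, h31, h32, h41, h42, h43, hdiag,
      smul_zero, smul_neg, sub_smul, smul_smul]
    module
  constructor
  · intro h
    refine ⟨?_, ?_, ?_⟩
    · have := h (e 0) (e 1) (e 3)
      rw [h12, h24, h41, hg, hg, hg] at this
      simp only [he] at this
      simp [Pi.single_apply] at this
      linarith
    · have := h (e 2) (e 3) (e 0)
      rw [h34, h41, h13, hg, hg, hg] at this
      simp only [he] at this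
      simp [Pi.single_apply] at this
      linarith
    · have := h (e 2) (e 3) (e 1)
      rw [h34, h42, h23, hg, hg, hg] at this
      simp only [he] at this
      simp [Pi.single_apply] at this
      linarith
  · rintro ⟨rfl, rfl, rfl⟩ x y z
    rw [hg, hg, hg, hB x y, hB y z, hB z x]
    simp only [he, Pi.add_apply, Pi.smul_apply, smul_eq_mul, Pi.single_apply]
    simp
    ring
end

section
/- Let (e₁,e₂,e₃,e₄) be the standard basis of ℝ⁴ and let g be the symmetric bilinear form on ℝ⁴ with Gram matrix [[1,0,0,0],[0,1,0,0],[0,0,0,1],[0,0,1,0]]. Let α,β,μ ∈ ℝ and c₁,c₂,c₃,p₁,p₂,p₃,q₁,q₂,q₃ ∈ ℝ, and define the unique bilinear skew-symmetric bracket on ℝ⁴ by [e₁,e₂] = αe₁, [e₁,e₃] = βe₁, [e₂,e₃] = μe₁, [e₁,e₄] = c₁e₁ + c₂e₂ + c₃e₃, [e₂,e₄] = p₁e₁ + p₂e₂ + p₃e₃, [e₃,e₄] = q₁e₁ + q₂e₂ + q₃e₃. Then g is cyclic with respect to this bracket if and only if μ = 0, c₂ = p₁, q₁ = 0, and q₂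 = 0. -/
set_option maxHeartbeats 2000000 in
theorem stmt_17 (α β μ c₁ c₂ c₃ p₁ p₂ p₃ q₁ q₂ q₃ : ℝ)
    (B : (Fin 4 → ℝ) →ₗ[ℝ] (Fin 4 → ℝ) →ₗ[ℝ] (Fin 4 → ℝ))
    (hskew : ∀ x y, B x y = -B y x)
    (e : Fin 4 → Fin 4 → ℝ) (he : ∀ i, e i = Pi.single i 1)
    (h12 : B (e 0) (e 1) = α • e 0)
    (h13 : B (e 0) (e 2) = β • e 0)
    (h23 : B (e 1) (e 2) = μ • e 0)
    (h14 : B (e 0) (e 3) = c₁ • e 0 + c₂ • e 1 + c₃ • e 2)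
    (h24 : B (e 1) (e 3) = p₁ • e 0 + p₂ • e 1 + p₃ • e 2)
    (h34 : B (e 2) (e 3) = q₁ • e 0 + q₂ • e 1 + q₃ • e 2)
    (g : (Fin 4 → ℝ) → (Fin 4 → ℝ) → ℝ)
    (hg : ∀ x y, g x y = x 0 * y 0 + x 1 * y 1 + x 2 * y 3 + x 3 * y 2) :
    (∀ x y z, g (B x y) z + g (B y z) x + g (B z x) y = 0) ↔ (μ = 0 ∧ c₂ = p₁ ∧ q₁ = 0 ∧ q₂ = 0) := by
  have hself : ∀ w, B w w = 0 := by
    intro w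
    have h := hskew w w
    have h2 : (2:ℝ) • B w w = 0 := by rw [two_smul]; nth_rewrite 2 [h]; simp
    simpa using (smul_eq_zero.mp h2).resolve_left (by norm_num)
  have h21 : B (e 1) (e 0) = -(α • e 0) := by rw [hskew, h12]
  have h31 : B (e 2) (e 0) = -(β • e 0) := by rw [hskew, h13]
  have h32 : B (e 2) (e 1) = -(μ • e 0) := by rw [hskew, h23]
  have h41 : B (e 3) (e 0) = -(c₁ • e 0 + c₂ • e 1 + c₃ • e 2) := by rw [hskew, h14]
  have h42 : B (e 3) (e 1) = -(p₁ • e 0 + p₂ • e 1 + p₃ • e 2) := by rw [hskew, h24]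
  have h43 : B (e 3) (e 2) = -(q₁ • e 0 + q₂ • e 1 + q₃ • e 2) := by rw [hskew, h34]
  constructor
  · intro h
    have hμ := h (e 0) (e 1) (e 2)
    have hcp := h (e 0) (e 1) (e 3)
    have hq1 := h (e 0) (e 2) (e 3)
    have hq2 := h (e 1) (e 2) (e 3)
    simp only [h12, h13, h23, h14, h24, h34, h21, h31, h32, h41, h42, h43] at hμ hcp hq1 hq2
    simp [hg, he, Pi.single_apply] at hμ hcp hq1 hq2
    exact ⟨hμ, by linarith, hq1, hq2⟩
  · rintro ⟨hμ, hc, hq1, hq2⟩ x y z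
    subst hμ hc hq1 hq2
    have hB : ∀ a0 a1 a2 a3 b0 b1 b2 b3 : ℝ,
        B (a0 • e 0 + a1 • e 1 + a2 • e 2 + a3 • e 3)
          (b0 • e 0 + b1 • e 1 + b2 • e 2 + b3 • e 3) =
        (α * (a0*b1 - a1*b0) + β * (a0*b2 - a2*b0) + c₁ * (a0*b3 - a3*b0)
          + c₂ * (a1*b3 - a3*b1)) • e 0
        + (c₂ * (a0*b3 - a3*b0) + p₂ * (a1*b3 - a3*b1)) • e 1
        + (c₃ * (a0*b3 - a3*b0) + p₃ * (a1*b3 - a3*b1) + q₃ * (a2*b3 - a3*b2)) • e 2 := by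
      intro a0 a1 a2 a3 b0 b1 b2 b3
      simp only [map_add, map_smul, LinearMap.add_apply, LinearMap.smul_apply,
        h12, h13, h23, h14, h24, h34, h21, h31, h32, h41, h42, h43, hself,
        smul_zero, zero_smul, smul_add, smul_neg, smul_smul]
      module
    obtain ⟨a0, a1, a2, a3, hx⟩ : ∃ a0 a1 a2 a3, x = a0 • e 0 + a1 • e 1 + a2 • e 2 + a3 • e 3 :=
      ⟨x 0, x 1, x 2, x 3, by funext j; fin_cases j <;> simp [he, Pi.single_apply]⟩
    obtain ⟨b0, b1, b2, b3, hy⟩ : ∃ b0 b1 b2 b3, y = b0 • e 0 + b1 • e 1 + b2 • e 2 + b3 • e 3 :=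
      ⟨y 0, y 1, y 2, y 3, by funext j; fin_cases j <;> simp [he, Pi.single_apply]⟩
    obtain ⟨c0, c1, c2, c3', hz⟩ : ∃ c0 c1 c2 c3', z = c0 • e 0 + c1 • e 1 + c2 • e 2 + c3' • e 3 :=
      ⟨z 0, z 1, z 2, z 3, by funext j; fin_cases j <;> simp [he, Pi.single_apply]⟩
    subst hx hy hz
    rw [hB, hB, hB, hg, hg, hg]
    simp [he, Pi.single_apply]
    ring
end
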